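/- arXiv:1208.5061 — 2 statements merged into one kernel-verified Lean document; each statement's English description precedes it below -/
import Mathlib

section
/- Let R be a reflexive and transitive relation on W, let w ∈ W, and let S ⊆ W be a button at w, i.e. for all v with w R v we have v ∈ ◇□S. If the frame restricted to the cone of w validates the S5 axiom ◇p → □◇p for the upward modality, then w ∈ □S, i.e. S is already necessary at w (every button is pushed under S5). -/
/-- Under S5 (axiom 5 valid on the cone of w), every button at w is pushed:
if S is a button at w then S is necessary at w. -/
theorem stmt_10 {W : Type*} (R : W → W → Prop)
    (hrefl : ∀ w, R w w) (htrans : ∀ a b c, R a b → R b c → R a c)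
    (S : Set W) (w : W)
    (hbutton : ∀ v, R w v → ∃ u, R v u ∧ ∀ z, R u z → z ∈ S)
    (h5 : ∀ (P : Set W) (v : W), R w v →
      (∃ u, R v u ∧ u ∈ P) → ∀ x, R v x → ∃ u, R x u ∧ u ∈ P) :
    ∀ v, R w v → v ∈ S := by
  intro v hwv
  by_contra hv
  obtain ⟨u, hvu, hu⟩ := hbutton v hwv
  obtain ⟨z, huz, hz⟩ := h5 Sᶜ v hwv ⟨v, hrefl v, hv⟩ u hvu
  exact hz (hu z huz)
end

section
/- Let (W, ≤) be a bimodal frame in which the upward relation is a reflexive transitive relation ≤ and the downward relation is its converse. Call S ⊆ W an unpushed downward button at w if for every u ≤ w there is v ≤ u such that S holds at all v' ≤ v, and w ∉ □↓S; call a set an unpushed upward button at w in the corresponding upward sense. Then there do not exist a reflexive transitive (W, ≤), a world w, and S ⊆ W such that (i) for all subsets P and all v ≥ w: v ∈ ◇↑P → v ∈ □↑◇↑P, (ii) for all subsets P and all v ≤ w: v ∈ ◇↓P → v ∈ □↓◇↓P, (iii) S is an unpushed downward button at w, and (iv) W∖S is an unpushed upward button at w. -/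
/-- It is impossible for both the upward and downward modal logics at a world
to validate the S5 axiom while there are an unpushed downward button S and an
unpushed upward button W∖S at that world. -/
theorem stmt_11 :
    ¬ ∃ (W : Type) (le : W → W → Prop) (w : W) (S : Set W),
      (∀ x, le x x) ∧ (∀ a b c, le a b → le b c → le a c) ∧
      -- (i) upward S5 axiom on the upward cone of w
      (∀ (P : Set W) (v : W), le w v →
        (∃ u, le v u ∧ u ∈ P) → ∀ x, le v x → ∃ u, le x u ∧ u ∈ P) ∧
      -- (ii) downward S5 axiom on the downward cone of w
      (∀ (P : Set W) (v : W), le v w →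
        (∃ u, le u v ∧ u ∈ P) → ∀ x, le x v → ∃ u, le u x ∧ u ∈ P) ∧
      -- (iii) S is an unpushed downward button at w
      (∀ u, le u w → ∃ v, le v u ∧ ∀ v', le v' v → v' ∈ S) ∧
      ¬ (∀ u, le u w → u ∈ S) ∧
      -- (iv) W∖S is an unpushed upward button at w
      (∀ u, le w u → ∃ v, le u v ∧ ∀ v', le v v' → v' ∈ Sᶜ) ∧
      ¬ (∀ u, le w u → u ∈ Sᶜ) := by
  rintro ⟨W, le, w, S, hrefl, htrans, hup, hdown, hiii, hniii, hiv, hniv⟩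
  push_neg at hniv
  obtain ⟨u₁, hwu₁, hu₁S⟩ := hniv
  simp only [Set.notMem_compl_iff] at hu₁S
  obtain ⟨v, hwv, hvcone⟩ := hiv w (hrefl w)
  obtain ⟨u, hvu, huS⟩ := hup S w (hrefl w) ⟨u₁, hwu₁, hu₁S⟩ v hwv
  exact hvcone u hvu huS
end
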